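/- Let m : ℕ × ℕ → ℕ be defined by the recurrence m(0,k) = 1 if k = 0 and m(0,k) = 0 otherwise, and for all n ≥ 0 and k ≥ 0: m(n+1,k) = Σ_{n₁+n₂=n} Σ_{k₁+k₂=k−2, k₁,k₂≥0} m(n₁,k₁)·m(n₂,k₂) + Σ_{j=k−1}^{2n} m(n,j), where the first (double) sum is empty when k < 2 and the second sum is empty when k = 0; set mₙ := Σ_{k=0}^{2n} m(n,k). Then for all integers n ≥ k ≥ 1, m(n,k) ≥ m_{n−k}. -/

import Mathlib

/-!
Dropping the bridge term, the recurrence gives `m n j ≤ m (n + 1) k` whenever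
`k - 1 ≤ j ≤ 2 n`, and for `k = 1` it reads `m (n + 1) 1 = mₙ`. Climbing the diagonal
`m (n - k + 1) 1 ≤ m (n - k + 2) 2 ≤ ⋯ ≤ m n k` from `m (n - k + 1) 1 = m_{n-k}` proves the bound.
-/

open Finset Nat

def RootEdgeRecurrence (m : ℕ → ℕ → ℕ) : Prop :=
  ∀ n k, m (n + 1) k =
    (if 2 ≤ k then
      ∑ p ∈ HasAntidiagonal.antidiagonal n, ∑ q ∈ HasAntidiagonal.antidiagonal (k - 2),
        m p.1 q.1 * m p.2 q.2
     else 0)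
    + (if k = 0 then 0 else ∑ j ∈ Icc (k - 1) (2 * n), m n j)

namespace RootEdgeRecurrence

variable {m : ℕ → ℕ → ℕ}

theorem succ_one (hrec : RootEdgeRecurrence m) (n : ℕ) :
    m (n + 1) 1 = ∑ j ∈ range (2 * n + 1), m n j := by
  rw [hrec, if_neg (by norm_num), if_neg one_ne_zero, zero_add, Nat.sub_self,
    range_eq_Ico, Ico_add_one_right_eq_Icc]

theorem le_succ_of_mem_Icc (hrec : RootEdgeRecurrence m) {n k j : ℕ} (hk : k ≠ 0)
    (hj : j ∈ Icc (k - 1) (2 * n)) : m n j ≤ m (n + 1) k := by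
  rw [hrec, if_neg hk]
  exact (single_le_sum (fun _ _ ↦ Nat.zero_le _) hj).trans (Nat.le_add_left _ _)

theorem sum_range_le_add (hrec : RootEdgeRecurrence m) (n : ℕ) {k : ℕ} (hk : 1 ≤ k) :
    ∑ j ∈ range (2 * n + 1), m n j ≤ m (n + k) k := by
  induction k, hk using Nat.le_induction with
  | base => exact (hrec.succ_one n).ge
  | succ k _ ih =>
    exact ih.trans (hrec.le_succ_of_mem_Icc k.succ_ne_zero (mem_Icc.2 ⟨le_rfl, by omega⟩))

end RootEdgeRecurrence

theorem maps_pure_gon_lower_bound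
    (m : ℕ → ℕ → ℕ)
    (hrec : ∀ n k, m (n + 1) k =
      (if 2 ≤ k then
        ∑ p ∈ Finset.HasAntidiagonal.antidiagonal n, ∑ q ∈ Finset.HasAntidiagonal.antidiagonal (k - 2),
          m p.1 q.1 * m p.2 q.2
       else 0)
      + (if k = 0 then 0 else ∑ j ∈ Finset.Icc (k - 1) (2 * n), m n j)) :
    ∀ n k : ℕ, 1 ≤ k → k ≤ n →
      (∑ j ∈ Finset.range (2 * (n - k) + 1), m (n - k) j) ≤ m n k := by
  intro n k hk hkn
  have h := RootEdgeRecurrence.sum_range_le_add hrec (n - k) hk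
  rwa [Nat.sub_add_cancel hkn] at h
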